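/- Let T be a tree of order n ≥ 3 with diameter at most 3, and let s be the number of support vertices of T. Then χ_d^t(T) = s + 1. -/

import Mathlib

open SimpleGraph

/-- `f` is a total dominator coloring of `G`: a proper coloring (with colors in `Fin n`)
such that every vertex is adjacent to every vertex of some nonempty color class. -/
def IsTDColoring {V : Type*} (G : SimpleGraph V) {n : ℕ} (f : V → Fin n) : Prop :=
  (∀ u v : V, G.Adj u v → f u ≠ f v) ∧
  ∀ v : V, ∃ i : Fin n, (∃ u, f u = i) ∧ ∀ u : V, f u = i → G.Adj v u

/-- The total dominator chromatic number `χ_d^t(G)`: the minimum number of color classes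
in a total dominator coloring of `G`. -/
noncomputable def tdChromNum {V : Type*} (G : SimpleGraph V) : ℕ :=
  sInf {n : ℕ | ∃ f : V → Fin n, IsTDColoring G f}

/-- `f` is a dominator coloring of `G`: a proper coloring such that every vertex dominates
some nonempty color class (the class is contained in its closed neighborhood). -/
def IsDColoring {V : Type*} (G : SimpleGraph V) {n : ℕ} (f : V → Fin n) : Prop :=
  (∀ u v : V, G.Adj u v → f u ≠ f v) ∧
  ∀ v : V, ∃ i : Fin n, (∃ u, f u = i) ∧ ∀ u : V, f u = i → u = v ∨ G.Adj v u

/-- The dominator chromatic number `χ_d(G)`. -/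
noncomputable def dChromNum {V : Type*} (G : SimpleGraph V) : ℕ :=
  sInf {n : ℕ | ∃ f : V → Fin n, IsDColoring G f}

/-- The total domination number `γ_t(G)`: the minimum size of a set `S` such that every
vertex of `G` has a neighbor in `S`. -/
noncomputable def totalDomNum {V : Type*} (G : SimpleGraph V) : ℕ :=
  sInf {n : ℕ | ∃ S : Finset V, S.card = n ∧ ∀ v : V, ∃ u ∈ S, G.Adj v u}

/-
A tree of diameter at most 3 on at least three vertices is a star or a double star: its non-leaves
are pairwise adjacent (two non-adjacent non-leaves `u`, `v` would extend the `u`–`v` path at both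
ends to a path of length `d(u, v) + 2 ≥ 4`), and every non-leaf carries a leaf. Colouring each
support vertex on its own and all leaves with one extra colour is a total dominator colouring.
Conversely, a leaf only dominates its support vertex, so in any total dominator colouring each
support vertex forms a singleton class, and a leaf needs yet another colour.
-/

namespace SimpleGraph

variable {V : Type*} {G : SimpleGraph V}

def supportSet [Fintype V] (G : SimpleGraph V) [DecidableRel G.Adj] : Set V :=
  {v | 1 < G.degree v ∧ ∃ u, G.Adj v u ∧ G.degree u = 1}

lemma eq_of_adj_of_degree_eq_one {u a b : V} [Fintype (G.neighborSet u)]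
    (hu : G.degree u = 1) (ha : G.Adj u a) (hb : G.Adj u b) : a = b := by
  obtain ⟨w, -, hw⟩ := degree_eq_one_iff_existsUnique_adj.mp hu
  exact (hw a ha).trans (hw b hb).symm

lemma Connected.exists_adj_dist_add_one_eq (hG : G.Connected) {x z : V} (hxz : x ≠ z) :
    ∃ y, G.Adj x y ∧ G.dist z y + 1 = G.dist z x := by
  obtain ⟨p, hp⟩ := hG.exists_walk_length_eq_dist x z
  cases p with
  | nil => exact absurd rfl hxz
  | cons h q =>
    refine ⟨_, h, le_antisymm ?_ ?_⟩
    · have := dist_le q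
      rw [Walk.length_cons] at hp
      rw [dist_comm (u := z), dist_comm (u := z)]
      omega
    · have := h.symm.reachable.dist_triangle_right z
      rwa [dist_eq_one_iff_adj.mpr h.symm] at this

lemma IsTree.eq_of_adj_of_dist_add_one_eq (hG : G.IsTree) {x y y' z : V}
    (hy : G.Adj x y) (hy' : G.Adj x y') (h : G.dist z y + 1 = G.dist z x)
    (h' : G.dist z y' + 1 = G.dist z x) : y = y' := by
  obtain ⟨q, hq⟩ := hG.connected.exists_walk_length_eq_dist z y
  obtain ⟨q', hq'⟩ := hG.connected.exists_walk_length_eq_dist z y'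
  have hp := (q.concat hy.symm).isPath_of_length_eq_dist (by simp [hq, h])
  have hp' := (q'.concat hy'.symm).isPath_of_length_eq_dist (by simp [hq', h'])
  have := hG.isAcyclic.subsingleton_path z x |>.elim ⟨_, hp⟩ ⟨_, hp'⟩
  exact (Walk.concat_inj (Subtype.mk.inj this)).1

section LocallyFinite

variable [G.LocallyFinite]

lemma IsTree.exists_adj_dist_eq_add_one (hG : G.IsTree) {x : V} (hx : 1 < G.degree x) (z : V) :
    ∃ y, G.Adj x y ∧ G.dist z y = G.dist z x + 1 := by
  obtain ⟨y₁, hy₁, y₂, hy₂, hne⟩ := Finset.one_lt_card.mp hx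
  rw [mem_neighborFinset] at hy₁ hy₂
  by_contra! hfar
  have h₁ := (hG.dist_eq_dist_add_one_of_adj z hy₁).resolve_right (hfar _ hy₁)
  have h₂ := (hG.dist_eq_dist_add_one_of_adj z hy₂).resolve_right (hfar _ hy₂)
  exact hne (hG.eq_of_adj_of_dist_add_one_eq hy₁ hy₂ h₁.symm h₂.symm)

lemma IsTree.exists_dist_eq_dist_add_two (hG : G.IsTree) {u v : V} (hu : 1 < G.degree u)
    (hv : 1 < G.degree v) : ∃ u' v', G.dist u' v' = G.dist u v + 2 := by
  obtain ⟨u', -, hu'⟩ := hG.exists_adj_dist_eq_add_one hu v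
  obtain ⟨v', -, hv'⟩ := hG.exists_adj_dist_eq_add_one hv u'
  refine ⟨u', v', ?_⟩
  rw [hv', dist_comm, hu', dist_comm]

lemma IsTree.adj_of_one_lt_degree (hG : G.IsTree) (hdiam : ∀ u v, G.dist u v ≤ 3) {u v : V}
    (hu : 1 < G.degree u) (hv : 1 < G.degree v) (huv : u ≠ v) : G.Adj u v := by
  by_contra hnadj
  have := hG.connected.one_lt_dist_of_ne_of_not_adj huv hnadj
  obtain ⟨u', v', h⟩ := hG.exists_dist_eq_dist_add_two hu hv
  have := hdiam u' v'
  omega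

lemma Connected.one_lt_degree_of_adj_of_degree_eq_one [Fintype V] (hG : G.Connected)
    (hn : 3 ≤ Fintype.card V) {u w : V} (hu : G.degree u = 1) (huw : G.Adj u w) :
    1 < G.degree w := by
  classical
  by_contra! hw
  replace hw : G.degree w = 1 := le_antisymm hw huw.degree_pos_right
  obtain ⟨z, -, hz⟩ := Finset.exists_mem_notMem_of_card_lt_card
    (s := {u, w}) (t := .univ) (Finset.card_le_two.trans_lt (by rw [Finset.card_univ]; omega))
  simp only [Finset.mem_insert, Finset.mem_singleton, not_or] at hz
  -- `u` and `w` are each other's only neighbour, so each would be closer to `z` than the other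
  obtain ⟨a, hua, ha⟩ := hG.exists_adj_dist_add_one_eq (Ne.symm hz.1)
  obtain ⟨b, hwb, hb⟩ := hG.exists_adj_dist_add_one_eq (Ne.symm hz.2)
  rw [eq_of_adj_of_degree_eq_one hu hua huw] at ha
  rw [eq_of_adj_of_degree_eq_one hw hwb huw.symm] at hb
  omega

end LocallyFinite

lemma IsTree.supportSet_eq [Fintype V] [DecidableRel G.Adj] (hG : G.IsTree)
    (hdiam : ∀ u v, G.dist u v ≤ 3) : G.supportSet = {v | 1 < G.degree v} := by
  classical
  ext v
  refine ⟨And.left, fun hv => ⟨hv, ?_⟩⟩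
  obtain ⟨a, ha, b, hb, hab⟩ := Finset.one_lt_card.mp hv
  rw [mem_neighborFinset] at ha hb
  by_contra! hleaf
  have hnonleaf : ∀ u, G.Adj v u → 1 < G.degree u := fun u hu => by
    have := hu.degree_pos_right
    have := hleaf u hu
    omega
  have hab' := hG.adj_of_one_lt_degree hdiam (hnonleaf a ha) (hnonleaf b hb) hab
  exact hG.isAcyclic.cliqueFree le_rfl {v, a, b} (is3Clique_triple_iff.mpr ⟨ha, hb, hab'⟩)

end SimpleGraph

section Coloring

variable {V : Type*} {G : SimpleGraph V}

noncomputable def singletonClassColoring [DecidableEq V] (S : Finset V) (v : V) :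
    Fin (S.card + 1) :=
  if h : v ∈ S then (S.equivFin ⟨v, h⟩).castSucc else Fin.last _

lemma singletonClassColoring_eq_iff [DecidableEq V] {S : Finset V} {u v : V} :
    singletonClassColoring S u = singletonClassColoring S v ↔ u = v ∨ u ∉ S ∧ v ∉ S := by
  unfold singletonClassColoring
  split_ifs with hu hv hv
  · simp [S.equivFin.injective.eq_iff, hu]
  · simpa [Fin.castSucc_ne_last, hu] using ne_of_mem_of_not_mem hu hv
  · simpa [(Fin.castSucc_ne_last _).symm, hv] using (ne_of_mem_of_not_mem hv hu).symm
  · simp [hu, hv]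

lemma isTDColoring_singletonClassColoring [DecidableEq V] {S : Finset V}
    (hS : ∀ u v, G.Adj u v → u ∈ S ∨ v ∈ S)
    (hdom : ∀ v, (∃ w ∈ S, G.Adj v w) ∨ (∃ u, u ∉ S) ∧ ∀ u ∉ S, G.Adj v u) :
    IsTDColoring G (singletonClassColoring S) := by
  refine ⟨fun u v huv heq => ?_, fun v => ?_⟩
  · rcases singletonClassColoring_eq_iff.mp heq with h | ⟨hu, hv⟩
    · exact huv.ne h
    · exact (hS u v huv).elim hu hv
  · rcases hdom v with ⟨w, hw, hvw⟩ | ⟨⟨u, hu⟩, hall⟩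
    · refine ⟨_, ⟨w, rfl⟩, fun u hu => ?_⟩
      rcases singletonClassColoring_eq_iff.mp hu with rfl | ⟨-, hw'⟩
      exacts [hvw, absurd hw hw']
    · refine ⟨_, ⟨u, rfl⟩, fun x hx => hall x ?_⟩
      rcases singletonClassColoring_eq_iff.mp hx with rfl | ⟨hx, -⟩
      exacts [hu, hx]

lemma tdChromNum_eq_of_isTDColoring {m : ℕ} {f : V → Fin m} (hf : IsTDColoring G f)
    (hmin : ∀ n (g : V → Fin n), IsTDColoring G g → m ≤ n) : tdChromNum G = m :=
  le_antisymm (Nat.sInf_le ⟨f, hf⟩) (le_csInf ⟨m, f, hf⟩ fun n ⟨g, hg⟩ => hmin n g hg)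

lemma IsTDColoring.eq_of_eq_of_adj_of_degree_eq_one {n : ℕ} {f : V → Fin n}
    (hf : IsTDColoring G f) {s u w : V} [Fintype (G.neighborSet u)] (hus : G.Adj u s)
    (hu : G.degree u = 1) (hw : f w = f s) : w = s := by
  obtain ⟨_, ⟨x, rfl⟩, hx⟩ := hf.2 u
  obtain rfl : x = s := eq_of_adj_of_degree_eq_one hu (hx x rfl) hus
  exact eq_of_adj_of_degree_eq_one hu (hx w hw) hus

lemma IsTDColoring.ncard_supportSet_add_one_le [Fintype V] [DecidableRel G.Adj] {n : ℕ}
    {f : V → Fin n} (hf : IsTDColoring G f) {x : V} (hx : x ∉ G.supportSet) :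
    G.supportSet.ncard + 1 ≤ n := by
  have hclass : ∀ s ∈ G.supportSet, ∀ w, f w = f s → w = s :=
    fun s ⟨_, u, hsu, hu⟩ w hw => hf.eq_of_eq_of_adj_of_degree_eq_one hsu.symm hu hw
  have hinj : Set.InjOn f (insert x G.supportSet) := by
    rintro a ha b hb hab
    rcases Set.mem_insert_iff.mp ha with rfl | ha
    · rcases Set.mem_insert_iff.mp hb with rfl | hb
      exacts [rfl, hclass b hb a hab]
    · exact (hclass a ha b hab.symm).symm
  calc G.supportSet.ncard + 1 = (insert x G.supportSet).ncard :=
        (Set.ncard_insert_of_notMem hx).symm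
    _ ≤ (Set.univ : Set (Fin n)).ncard := Set.ncard_le_ncard_of_injOn f (fun _ _ => trivial) hinj
    _ = n := by simp

lemma SimpleGraph.IsTree.isTDColoring_singletonClassColoring [Fintype V] [DecidableRel G.Adj]
    [DecidableEq V] (hG : G.IsTree) (hn : 3 ≤ Fintype.card V)
    (hdiam : ∀ u v, G.dist u v ≤ 3) :
    IsTDColoring G (singletonClassColoring {v | 1 < G.degree v}) := by
  set S : Finset V := {v | 1 < G.degree v}
  have hmem (v : V) : v ∈ S ↔ 1 < G.degree v := by simp [S]
  have : Nontrivial V := Fintype.one_lt_card_iff_nontrivial.mp (by omega)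
  have hpos (v : V) : 0 < G.degree v :=
    (G.degree_pos v).mpr (hG.connected.preconnected.not_isIsolated v)
  have hsupp (u w : V) (hu : u ∉ S) (huw : G.Adj u w) : w ∈ S := by
    rw [hmem, not_lt] at hu
    exact (hmem w).mpr <|
      hG.connected.one_lt_degree_of_adj_of_degree_eq_one hn (le_antisymm hu (hpos u)) huw
  refine _root_.isTDColoring_singletonClassColoring
    (fun u v huv => or_iff_not_imp_left.mpr fun hu => hsupp u v hu huv) (fun v => ?_)
  obtain ⟨w, hvw⟩ := (G.degree_pos_iff_exists_adj v).mp (hpos v)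
  by_cases hv : v ∈ S
  · by_cases hother : ∃ w ∈ S, w ≠ v
    · obtain ⟨w, hw, hwv⟩ := hother
      refine .inl ⟨w, hw, ?_⟩
      exact hG.adj_of_one_lt_degree hdiam ((hmem v).mp hv) ((hmem w).mp hw) hwv.symm
    · push Not at hother
      refine .inr ⟨⟨w, fun hw => hvw.ne (hother w hw).symm⟩, fun u hu => ?_⟩
      obtain ⟨x, hux⟩ := (G.degree_pos_iff_exists_adj u).mp (hpos u)
      obtain rfl := hother x (hsupp u x hu hux)
      exact hux.symm
  · exact .inl ⟨w, hsupp v w hv hvw, hvw⟩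

end Coloring

/-- If `T` is a tree of order `n ≥ 3` with diameter at most 3, then `χ_d^t(T) = s + 1`
where `s` is the number of support vertices. -/
theorem stmt18 {V : Type*} [Fintype V] (T : SimpleGraph V) [DecidableRel T.Adj]
    (htree : T.IsTree) (hn : 3 ≤ Fintype.card V)
    (hdiam : ∀ u v : V, T.dist u v ≤ 3) :
    tdChromNum T =
      {v : V | 1 < T.degree v ∧ ∃ u : V, T.Adj v u ∧ T.degree u = 1}.ncard + 1 := by
  classical
  have : Nontrivial V := Fintype.one_lt_card_iff_nontrivial.mp (by omega)
  obtain ⟨x, hx⟩ := htree.exists_vert_degree_one_of_nontrivial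
  have hcard : T.supportSet.ncard = ({v | 1 < T.degree v} : Finset V).card := by
    rw [htree.supportSet_eq hdiam, ← Set.ncard_coe_finset]
    simp
  change tdChromNum T = T.supportSet.ncard + 1
  refine hcard ▸ tdChromNum_eq_of_isTDColoring
    (htree.isTDColoring_singletonClassColoring hn hdiam) fun n f hf => ?_
  exact hcard ▸ hf.ncard_supportSet_add_one_le (x := x) fun h => h.1.ne' hx
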